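/- Let R = k⟦x,y⟧/(x²y). Then the annihilator of the stable endomorphism module of R/xR equals xR, and the annihilator of the stable endomorphism module of R/yR equals (x²,y)R; consequently Ann(R/xR ⊕ R/yR) = (x², xy)R. -/

import Mathlib

open CategoryTheory IsLocalRing

universe u

variable (R : Type u) [CommRing R]

/-- The submodule of `Hom_R(M,N)` consisting of maps factoring through a projective module. -/
def projStable (M N : Type u) [AddCommGroup M] [Module R M] [AddCommGroup N] [Module R N] :
    Submodule R (M →ₗ[R] N) where
  carrier := {f | ∃ (P : Type u) (_ : AddCommGroup P) (_ : Module R P)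
    (_ : Module.Projective R P) (g : M →ₗ[R] P) (h : P →ₗ[R] N), f = h.comp g}
  zero_mem' := ⟨PUnit, inferInstance, inferInstance, inferInstance, 0, 0, by ext x; simp⟩
  add_mem' := by
    rintro f f' ⟨P, _, _, _, g, h, rfl⟩ ⟨P', _, _, _, g', h', rfl⟩
    exact ⟨P × P', inferInstance, inferInstance, inferInstance, g.prod g',
      h.comp (LinearMap.fst R P P') + h'.comp (LinearMap.snd R P P'), by ext x; simp⟩
  smul_mem' := by
    rintro r f ⟨P, _, _, _, g, h, rfl⟩
    exact ⟨P, inferInstance, inferInstance, inferInstance, g, r • h, by ext x; simp⟩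

/-- The stable hom module `Hom_R(M,N)/P_R(M,N)`. -/
def stableHom (M N : Type u) [AddCommGroup M] [Module R M] [AddCommGroup N] [Module R N] :=
  (M →ₗ[R] N) ⧸ projStable R M N

noncomputable instance (M N : Type u) [AddCommGroup M] [Module R M] [AddCommGroup N]
    [Module R N] : AddCommGroup (stableHom R M N) :=
  inferInstanceAs (AddCommGroup ((M →ₗ[R] N) ⧸ projStable R M N))

noncomputable instance (M N : Type u) [AddCommGroup M] [Module R M] [AddCommGroup N]
    [Module R N] : Module R (stableHom R M N) :=
  inferInstanceAs (Module R ((M →ₗ[R] N) ⧸ projStable R M N))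

/-- `Ann(M)`: the annihilator of the stable endomorphism module of `M`. -/
noncomputable def stAnn (M : Type u) [AddCommGroup M] [Module R M] : Ideal R :=
  Module.annihilator R (stableHom R M M)

/-- `Ext_R^n(M,N)` as an `R`-module. -/
noncomputable abbrev ExtM (n : ℕ) (M : ModuleCat.{u} R) (N : ModuleCat.{u} R) :
    ModuleCat.{u} R :=
  ((Ext R (ModuleCat.{u} R) n).obj (Opposite.op M)).obj N

/-- `ca^n(R)`, the `n`-th cohomology annihilator ideal. -/
noncomputable def ca (n : ℕ) : Ideal R :=
  ⨅ (m : ℕ) (_ : n ≤ m) (M : ModuleCat.{u} R) (N : ModuleCat.{u} R)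
    (_ : Module.Finite R M) (_ : Module.Finite R N),
    Module.annihilator R (ExtM R m M N)


/-- The one-dimensional D-infinity hypersurface `k⟦x,y⟧/(x²y)`. -/
noncomputable abbrev Dinf (k : Type u) [Field k] : Type u :=
  (MvPowerSeries (Fin 2) k) ⧸
    (Ideal.span {(MvPowerSeries.X (0 : Fin 2) : MvPowerSeries (Fin 2) k) ^ 2 *
      MvPowerSeries.X (1 : Fin 2)})

/-- The image of `x` in `k⟦x,y⟧/(x²y)`. -/
noncomputable def dx (k : Type u) [Field k] : Dinf k :=
  Ideal.Quotient.mk _ (MvPowerSeries.X 0)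

/-- The image of `y` in `k⟦x,y⟧/(x²y)`. -/
noncomputable def dy (k : Type u) [Field k] : Dinf k :=
  Ideal.Quotient.mk _ (MvPowerSeries.X 1)

/-! A multiple `r • id` of the identity of `R ⧸ (z)` factors through a projective module iff
`r ∈ (z) + ann(z)`: lift the factorisation through `R → R ⧸ (z)` and evaluate at `1`.
In `k⟦x,y⟧/(x²y)` one has `ann(x) = (xy)` and `ann(y) = (x²)`, and since `x` generates a prime
ideal not containing `y`, `(x) ∩ (x², y) = (x², xy)`. -/

section StableHom

variable {R}
variable {M N K : Type u} [AddCommGroup M] [Module R M] [AddCommGroup N] [Module R N]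
  [AddCommGroup K] [Module R K]

theorem comp_mem_projStable_left {f : M →ₗ[R] N} (hf : f ∈ projStable R M N) (g : K →ₗ[R] M) :
    f.comp g ∈ projStable R K N := by
  obtain ⟨P, _, _, _, a, b, rfl⟩ := hf
  exact ⟨P, _, _, ‹_›, a.comp g, b, rfl⟩

theorem comp_mem_projStable_right {f : M →ₗ[R] N} (hf : f ∈ projStable R M N) (g : N →ₗ[R] K) :
    g.comp f ∈ projStable R M K := by
  obtain ⟨P, _, _, _, a, b, rfl⟩ := hf
  exact ⟨P, _, _, ‹_›, a, g.comp b, rfl⟩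

theorem mem_stAnn_iff {r : R} : r ∈ stAnn R M ↔ r • LinearMap.id ∈ projStable R M M := by
  rw [stAnn, Module.mem_annihilator]
  refine ⟨fun h ↦ ?_, fun h f ↦ ?_⟩
  · have : r • (Submodule.Quotient.mk LinearMap.id : (M →ₗ[R] M) ⧸ projStable R M M) = 0 :=
      h _
    rwa [← Submodule.Quotient.mk_smul, Submodule.Quotient.mk_eq_zero] at this
  · obtain ⟨f, rfl⟩ := Submodule.Quotient.mk_surjective (projStable R M M) f
    change r • Submodule.Quotient.mk (p := projStable R M M) f = 0
    rw [← Submodule.Quotient.mk_smul, Submodule.Quotient.mk_eq_zero,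
      ← LinearMap.id_comp f, ← LinearMap.smul_comp]
    exact comp_mem_projStable_left h f

theorem annihilator_le_stAnn : Module.annihilator R M ≤ stAnn R M := by
  intro r hr
  have : r • (LinearMap.id : M →ₗ[R] M) = 0 := by
    ext m; exact Module.mem_annihilator.mp hr m
  rw [mem_stAnn_iff, this]
  exact zero_mem _

theorem stAnn_prod : stAnn R (M × N) = stAnn R M ⊓ stAnn R N := by
  ext r
  simp only [Submodule.mem_inf, mem_stAnn_iff]
  constructor
  · intro h
    constructor
    · convert comp_mem_projStable_left (comp_mem_projStable_right h (LinearMap.fst R M N))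
        (LinearMap.inl R M N) using 1
      ext; simp
    · convert comp_mem_projStable_left (comp_mem_projStable_right h (LinearMap.snd R M N))
        (LinearMap.inr R M N) using 1
      ext; simp
  · rintro ⟨hM, hN⟩
    have : r • (LinearMap.id : M × N →ₗ[R] M × N) =
        (LinearMap.inl R M N).comp ((r • LinearMap.id).comp (LinearMap.fst R M N)) +
        (LinearMap.inr R M N).comp ((r • LinearMap.id).comp (LinearMap.snd R M N)) := by
      ext <;> simp
    rw [this]
    exact add_mem
      (comp_mem_projStable_right (comp_mem_projStable_left hM _) _)
      (comp_mem_projStable_right (comp_mem_projStable_left hN _) _)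

end StableHom

section PrincipalQuotient

variable {R}

theorem stAnn_quotient_span_singleton_le (z : R) :
    stAnn R (R ⧸ Ideal.span {z}) ≤ Ideal.span {z} ⊔ (Ideal.span {z}).annihilator := by
  intro r hr
  obtain ⟨P, _, _, _, g, h, hgh⟩ := mem_stAnn_iff.mp hr
  obtain ⟨h', hh'⟩ := Module.projective_lifting_property (Ideal.span {z}).mkQ h
    (Submodule.mkQ_surjective _)
  set one : R ⧸ Ideal.span {z} := Submodule.Quotient.mk 1
  set a := h' (g one)
  have ha : a ∈ (Ideal.span {z}).annihilator := by
    have hz : z • one = 0 := by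
      rw [← Submodule.Quotient.mk_smul, smul_eq_mul, mul_one, Submodule.Quotient.mk_eq_zero]
      exact Ideal.mem_span_singleton_self z
    rw [Submodule.mem_annihilator_span_singleton, smul_eq_mul, mul_comm, ← smul_eq_mul,
      ← map_smul, ← map_smul, hz, map_zero, map_zero]
  have hra : (Submodule.Quotient.mk r : R ⧸ Ideal.span {z}) = Submodule.Quotient.mk a := by
    calc Submodule.Quotient.mk r = (r • LinearMap.id : _ →ₗ[R] _) one := by
          rw [LinearMap.smul_apply, LinearMap.id_apply, ← Submodule.Quotient.mk_smul,
            smul_eq_mul, mul_one]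
      _ = (Ideal.span {z}).mkQ a := by rw [hgh, ← hh']; rfl
  exact Submodule.mem_sup.mpr
    ⟨r - a, (Submodule.Quotient.eq _).mp hra, a, ha, sub_add_cancel r a⟩

theorem annihilator_span_singleton_le_stAnn (z : R) :
    (Ideal.span {z}).annihilator ≤ stAnn R (R ⧸ Ideal.span {z}) := by
  intro a ha
  have hker : Ideal.span {z} ≤ LinearMap.ker (a • LinearMap.id : R →ₗ[R] R) := by
    rw [Ideal.span_le, Set.singleton_subset_iff]
    simpa using (Submodule.mem_annihilator_span_singleton z a).mp ha
  refine mem_stAnn_iff.mpr ⟨R, _, _, inferInstance,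
    (Ideal.span {z}).liftQ (a • LinearMap.id) hker, (Ideal.span {z}).mkQ, ?_⟩
  refine LinearMap.ext fun m ↦ ?_
  obtain ⟨s, rfl⟩ := Submodule.Quotient.mk_surjective _ m
  simp only [LinearMap.comp_apply, LinearMap.smul_apply, LinearMap.id_apply,
    Submodule.liftQ_apply, Submodule.mkQ_apply, Submodule.Quotient.mk_smul]

theorem stAnn_quotient_span_singleton (z : R) :
    stAnn R (R ⧸ Ideal.span {z}) = Ideal.span {z} ⊔ (Ideal.span {z}).annihilator := by
  refine le_antisymm (stAnn_quotient_span_singleton_le z) (sup_le ?_ ?_)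
  · calc Ideal.span {z} = Module.annihilator R (R ⧸ Ideal.span {z}) :=
          (Ideal.annihilator_quotient).symm
      _ ≤ _ := annihilator_le_stAnn
  · exact annihilator_span_singleton_le_stAnn z

end PrincipalQuotient

section Ideals

variable {S : Type*} [CommRing S]

theorem Ideal.span_singleton_inf_span_pair_sq {x y : S} (hx : (Ideal.span {x}).IsPrime)
    (hy : y ∉ Ideal.span {x}) :
    Ideal.span {x} ⊓ Ideal.span {x ^ 2, y} = Ideal.span {x ^ 2, x * y} := by
  refine le_antisymm (fun r hr ↦ ?_) ?_
  · obtain ⟨hrx, hr⟩ := Submodule.mem_inf.mp hr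
    obtain ⟨u, v, rfl⟩ := Ideal.mem_span_pair.mp hr
    have hvy : v * y ∈ Ideal.span {x} := by
      have hux : u * x ^ 2 ∈ Ideal.span {x} :=
        Ideal.mul_mem_left _ u (Ideal.mem_span_singleton.mpr (dvd_pow_self x two_ne_zero))
      simpa using Ideal.sub_mem _ hrx hux
    obtain ⟨w, rfl⟩ := Ideal.mem_span_singleton'.mp ((hx.mem_or_mem hvy).resolve_right hy)
    exact Ideal.mem_span_pair.mpr ⟨u, w, by ring⟩
  · rw [Ideal.span_le, Set.insert_subset_iff, Set.singleton_subset_iff]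
    refine ⟨⟨Ideal.mem_span_singleton.mpr (dvd_pow_self x two_ne_zero),
      Ideal.subset_span (Set.mem_insert _ _)⟩, ⟨Ideal.mem_span_singleton.mpr (dvd_mul_right x y),
      Ideal.mul_mem_left _ x (Ideal.subset_span (Set.mem_insert_of_mem _ rfl))⟩⟩

theorem Ideal.annihilator_span_mk_of_mul_eq {a b c : S} (hb : b ∈ nonZeroDivisors S)
    (hc : c = a * b) :
    (Ideal.span {Ideal.Quotient.mk (Ideal.span {c}) b}).annihilator =
      Ideal.span {Ideal.Quotient.mk (Ideal.span {c}) a} := by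
  ext r
  obtain ⟨s, rfl⟩ := Ideal.Quotient.mk_surjective r
  rw [Submodule.mem_annihilator_span_singleton, smul_eq_mul, ← map_mul,
    Ideal.Quotient.eq_zero_iff_mem, Ideal.mem_span_singleton', Ideal.mem_span_singleton']
  constructor
  · rintro ⟨t, ht⟩
    have hs : t * a = s :=
      (mul_cancel_right_mem_nonZeroDivisors hb).mp (by rw [mul_assoc, ← hc, ht])
    exact ⟨Ideal.Quotient.mk _ t, by rw [← map_mul, hs]⟩
  · rintro ⟨t, ht⟩
    obtain ⟨t, rfl⟩ := Ideal.Quotient.mk_surjective t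
    rw [← map_mul, Ideal.Quotient.eq, Ideal.mem_span_singleton'] at ht
    obtain ⟨e, he⟩ := ht
    exact ⟨t - e * b, by linear_combination t * hc - b * he⟩

end Ideals

theorem MvPowerSeries.prime_X_zero {R : Type*} [CommRing R] [IsDomain R] (n : ℕ) :
    Prime (X 0 : MvPowerSeries (Fin (n + 1)) R) := by
  have := NoZeroDivisors.to_isDomain (MvPowerSeries (Fin n) R)
  rw [← MulEquiv.prime_iff (finSuccEquiv R n), finSuccEquiv_X_zero]
  exact PowerSeries.X_prime

theorem MvPowerSeries.X_zero_not_dvd_X_one {R : Type*} [CommRing R] [Nontrivial R] :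
    ¬ (X 0 : MvPowerSeries (Fin 2) R) ∣ X 1 := by
  intro h
  have := MvPowerSeries.X_dvd_iff.mp h (Finsupp.single 1 1) (by simp)
  simp [MvPowerSeries.coeff_X] at this

section Dinf

open MvPowerSeries

variable (k : Type u) [Field k]

theorem dx_mul_dy : dx k * dy k = Ideal.Quotient.mk _ (X 0 * X 1) := (map_mul _ _ _).symm

theorem annihilator_span_dx :
    (Ideal.span {dx k}).annihilator = Ideal.span {dx k * dy k} := by
  rw [dx_mul_dy, dx]
  exact Ideal.annihilator_span_mk_of_mul_eq X_mem_nonzeroDivisors (by ring)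

theorem annihilator_span_dy :
    (Ideal.span {dy k}).annihilator = Ideal.span {dx k ^ 2} := by
  rw [dx, ← map_pow]
  exact Ideal.annihilator_span_mk_of_mul_eq X_mem_nonzeroDivisors rfl

theorem span_dx_eq_map :
    Ideal.span {dx k} = (Ideal.span {X 0}).map (Ideal.Quotient.mk _) := by
  rw [Ideal.map_span, Set.image_singleton, dx]

theorem ker_mk_le_span_X_zero :
    RingHom.ker (Ideal.Quotient.mk (Ideal.span {(X 0 : MvPowerSeries (Fin 2) k) ^ 2 * X 1})) ≤
      Ideal.span {X 0} := by
  rw [Ideal.mk_ker, Ideal.span_singleton_le_span_singleton]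
  exact ⟨X 0 * X 1, by ring⟩

theorem isPrime_span_dx : (Ideal.span {dx k}).IsPrime := by
  have := Ideal.isPrime_span_singleton_of_prime (prime_X_zero (R := k) 1)
  rw [span_dx_eq_map]
  exact Ideal.map_isPrime_of_surjective Ideal.Quotient.mk_surjective (ker_mk_le_span_X_zero k)

theorem dy_notMem_span_dx : dy k ∉ Ideal.span {dx k} := by
  rw [span_dx_eq_map, dy, ← Ideal.mem_comap,
    Ideal.comap_map_of_surjective _ Ideal.Quotient.mk_surjective, ← RingHom.ker_eq_comap_bot,
    sup_eq_left.mpr (ker_mk_le_span_X_zero k), Ideal.mem_span_singleton]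
  exact X_zero_not_dvd_X_one

end Dinf

theorem stmt9_general (k : Type u) [Field k] :
    stAnn (Dinf k) ((Dinf k) ⧸ (Ideal.span {dx k} : Ideal (Dinf k)))
      = Ideal.span {dx k} ∧
    stAnn (Dinf k) ((Dinf k) ⧸ (Ideal.span {dy k} : Ideal (Dinf k)))
      = Ideal.span {dx k ^ 2, dy k} ∧
    stAnn (Dinf k)
        (((Dinf k) ⧸ (Ideal.span {dx k} : Ideal (Dinf k))) ×
          ((Dinf k) ⧸ (Ideal.span {dy k} : Ideal (Dinf k))))
      = Ideal.span {dx k ^ 2, dx k * dy k} := by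
  have hx : stAnn (Dinf k) (Dinf k ⧸ Ideal.span {dx k}) = Ideal.span {dx k} := by
    rw [stAnn_quotient_span_singleton, annihilator_span_dx, sup_eq_left,
      Ideal.span_singleton_le_span_singleton]
    exact dvd_mul_right _ _
  have hy : stAnn (Dinf k) (Dinf k ⧸ Ideal.span {dy k}) = Ideal.span {dx k ^ 2, dy k} := by
    rw [stAnn_quotient_span_singleton, annihilator_span_dy, sup_comm, ← Ideal.span_insert]
  refine ⟨hx, hy, ?_⟩
  rw [stAnn_prod, hx, hy,
    Ideal.span_singleton_inf_span_pair_sq (isPrime_span_dx k) (dy_notMem_span_dx k)]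

/-- Let `R = k⟦x,y⟧/(x²y)` (char k ≠ 2). Then `Ann(R/xR) = xR`,
`Ann(R/yR) = (x²,y)R`, and consequently `Ann(R/xR ⊕ R/yR) = (x², xy)R`. -/
theorem stmt9 (k : Type u) [Field k] (hchar : ringChar k ≠ 2) :
    stAnn (Dinf k) ((Dinf k) ⧸ (Ideal.span {dx k} : Ideal (Dinf k)))
      = Ideal.span {dx k} ∧
    stAnn (Dinf k) ((Dinf k) ⧸ (Ideal.span {dy k} : Ideal (Dinf k)))
      = Ideal.span {dx k ^ 2, dy k} ∧
    stAnn (Dinf k)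
        (((Dinf k) ⧸ (Ideal.span {dx k} : Ideal (Dinf k))) ×
          ((Dinf k) ⧸ (Ideal.span {dy k} : Ideal (Dinf k))))
      = Ideal.span {dx k ^ 2, dx k * dy k} :=
  stmt9_general k
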